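/- arXiv:2101.11988 — 11 statements merged into one kernel-verified Lean document; each statement's English description precedes it below -/
import Mathlib

section
/- Let f(a,b,c) = (3 - b^2)*(a - c) - (a^2 - b^2)*(2 - c). Then f(a,b,c) ≥ 0 for all real numbers a, b, c with 0 ≤ c ≤ b ≤ a ≤ 1. -/
theorem stmt1 (a b c : ℝ) (h0 : 0 ≤ c) (h1 : c ≤ b) (h2 : b ≤ a) (h3 : a ≤ 1) :
    0 ≤ (3 - b^2)*(a - c) - (a^2 - b^2)*(2 - c) := by nlinarith [sq_nonneg (a-b), sq_nonneg (b-c), sq_nonneg (a-c), sq_nonneg a, sq_nonneg b, mul_nonneg h0 (sub_nonneg.2 h1), mul_nonneg (sub_nonneg.2 h1) (sub_nonneg.2 h2), mul_nonneg (sub_nonneg.2 h2) (sub_nonneg.2 h3), sq_nonneg (1-a), sq_nonneg (1-b)]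
end

section
/- Let x, y, z be complex numbers with |x| < 1, |y| < 1, x ≠ 0 or y ≠ 0, and suppose |z| ≤ (1 + max(|x|,|y|)) / (2 * max(|x|,|y|)). Let p = x * conj(y). Then |1 - p| ≤ 2 * |1 - |z|^2 * p|. -/
/-!
Write `t = |z|²`. Since `1 - p = (1 - t p) + (t - 1) p` and `|1 - t p| ≥ 1 - t |p|`, the claim follows
once `|t - 1| |p| + t |p| ≤ 1`. For `t ≤ 1` this is `|p| ≤ 1`; for `t > 1` it is `(2t - 1) |p| ≤ 1`, which
follows from `|p| ≤ m²` (with `m = max(|x|, |y|)`) and the bound on `|z|`, because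
`2 t m² ≤ (1 + m)² / 2 ≤ 1 + m²`.
-/

theorem norm_one_sub_le_two_mul_norm_one_sub_mul {R : Type*} [NormedRing R] [NormOneClass R]
    (w p : R) (h : ‖w - 1‖ * ‖p‖ + ‖w‖ * ‖p‖ ≤ 1) : ‖1 - p‖ ≤ 2 * ‖1 - w * p‖ := by
  have hsplit : ‖1 - p‖ ≤ ‖1 - w * p‖ + ‖w - 1‖ * ‖p‖ :=
    calc ‖1 - p‖ = ‖(1 - w * p) + (w - 1) * p‖ := by noncomm_ring
      _ ≤ ‖1 - w * p‖ + ‖(w - 1) * p‖ := norm_add_le _ _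
      _ ≤ ‖1 - w * p‖ + ‖w - 1‖ * ‖p‖ := by gcongr; exact norm_mul_le _ _
  have hlower : 1 - ‖w‖ * ‖p‖ ≤ ‖1 - w * p‖ :=
    calc 1 - ‖w‖ * ‖p‖ ≤ ‖(1 : R)‖ - ‖w * p‖ := by rw [norm_one]; gcongr; exact norm_mul_le _ _
      _ ≤ ‖1 - w * p‖ := norm_sub_norm_le _ _
  linarith

theorem two_mul_sq_mul_sq_le_one_add_sq {m r : ℝ} (hm : 0 ≤ m) (hr : 0 ≤ r)
    (hrm : r ≤ (1 + m) / (2 * m)) : 2 * r ^ 2 * m ^ 2 ≤ 1 + m ^ 2 := by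
  rcases hm.eq_or_lt with rfl | hm
  · norm_num
  have h2rm : r * (2 * m) ≤ 1 + m := (le_div_iff₀ (by positivity)).mp hrm
  nlinarith [mul_nonneg hr hm.le, sq_nonneg (1 - m)]

theorem abs_sub_one_mul_add_mul_le_one {t q m : ℝ} (hqm : q ≤ m ^ 2)
    (hm : m ^ 2 ≤ 1) (htm : 2 * t * m ^ 2 ≤ 1 + m ^ 2) : |t - 1| * q + t * q ≤ 1 := by
  rcases le_or_gt t 1 with h | h
  · rw [abs_of_nonpos (by linarith)]
    linarith
  · rw [abs_of_pos (by linarith)]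
    nlinarith [mul_le_mul_of_nonneg_left hqm (by linarith : (0 : ℝ) ≤ 2 * t - 1)]

theorem stmt2_general (x y z : ℂ) (hx : ‖x‖ < 1) (hy : ‖y‖ < 1)
    (hz : ‖z‖ ≤
      (1 + max ‖x‖ ‖y‖) / (2 * max ‖x‖ ‖y‖)) :
    ‖1 - x * (starRingEnd ℂ) y‖ ≤
      2 * ‖1 - ((‖z‖ : ℂ))^2 * (x * (starRingEnd ℂ) y)‖ := by
  set m := max ‖x‖ ‖y‖
  have hm0 : 0 ≤ m := (norm_nonneg x).trans (le_max_left _ _)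
  have hm1 : m ^ 2 ≤ 1 := pow_le_one₀ hm0 (max_lt hx hy).le
  have hp : ‖x * (starRingEnd ℂ) y‖ ≤ m ^ 2 := by
    rw [norm_mul, Complex.norm_conj, sq]
    exact mul_le_mul (le_max_left _ _) (le_max_right _ _) (norm_nonneg _) hm0
  have hw : (‖z‖ : ℂ) ^ 2 = ((‖z‖ ^ 2 : ℝ) : ℂ) := by push_cast; ring
  apply norm_one_sub_le_two_mul_norm_one_sub_mul
  rw [hw, ← Complex.ofReal_one, ← Complex.ofReal_sub, Complex.norm_real, Complex.norm_real,
    Real.norm_eq_abs, Real.norm_of_nonneg (by positivity)]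
  exact abs_sub_one_mul_add_mul_le_one hp hm1
    (by linarith [two_mul_sq_mul_sq_le_one_add_sq hm0 (norm_nonneg z) hz])

theorem stmt2 (x y z : ℂ) (hx : ‖x‖ < 1) (hy : ‖y‖ < 1)
    (hxy : x ≠ 0 ∨ y ≠ 0)
    (hz : ‖z‖ ≤
      (1 + max ‖x‖ ‖y‖) / (2 * max ‖x‖ ‖y‖)) :
    ‖1 - x * (starRingEnd ℂ) y‖ ≤
      2 * ‖1 - ((‖z‖ : ℂ))^2 * (x * (starRingEnd ℂ) y)‖ :=
  stmt2_general x y z hx hy hz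
end

section
/- Let z, w be complex numbers in the open unit disk and let λ be a complex number such that |λ| ≤ (1 + max(|z|,|w|)) / (2 * max(|z|,|w|)) (with max(|z|,|w|) > 0). Then λz and λw lie in the open unit disk and ρ(λz, λw) ≤ 2 * |λ| * ρ(z, w), where ρ(a,b) = |a - b| / |1 - conj(a)*b| is the pseudohyperbolic distance on the disk. -/
/-- The pseudohyperbolic distance on the open unit disk. -/
noncomputable def pseudoDist (a b : ℂ) : ℝ :=
  ‖(a - b) / (1 - (starRingEnd ℂ) a * b)‖

open ComplexConjugate

lemma mul_le_of_le_div_two_mul {a b : ℝ} (ha : 0 ≤ a) (hb : b ≤ (1 + a) / (2 * a)) :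
    b * a ≤ (1 + a) / 2 := by
  rcases ha.eq_or_lt with rfl | ha
  · norm_num
  · calc b * a ≤ (1 + a) / (2 * a) * a := by gcongr
      _ = (1 + a) / 2 := by field_simp

lemma pseudoDist_mul_mul (lam z w : ℂ) :
    pseudoDist (lam * z) (lam * w) =
      ‖lam‖ * ‖z - w‖ / ‖1 - ((‖lam‖ ^ 2 : ℝ) : ℂ) * (conj z * w)‖ := by
  have hconj : conj (lam * z) * (lam * w) = ((‖lam‖ ^ 2 : ℝ) : ℂ) * (conj z * w) := by
    rw [map_mul, Complex.ofReal_pow, ← Complex.conj_mul']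
    ring
  rw [pseudoDist, hconj, norm_div, ← mul_sub, norm_mul]

/-- Rescaling `u` by `t = L ^ 2` changes `‖1 - u‖` by at most a factor `2`: for `t ≤ 1` since
`(1 - t) ‖u‖ ≤ 1 - t ‖u‖`, and for `t > 1` since then `(t - 1) ‖u‖ ≤ (1 - ‖u‖) / 2`. -/
lemma norm_one_sub_le_two_mul_norm_one_sub_sq_mul {u : ℂ} {L m : ℝ} (hL : 0 ≤ L) (hm : 0 ≤ m)
    (hm1 : m < 1) (hu : ‖u‖ ≤ m ^ 2) (hLm : L * m ≤ (1 + m) / 2) :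
    ‖1 - u‖ ≤ 2 * ‖1 - ((L ^ 2 : ℝ) : ℂ) * u‖ := by
  set t := L ^ 2
  have ht : 0 ≤ t := sq_nonneg L
  have hu1 : ‖u‖ < 1 := hu.trans_lt (by nlinarith)
  have htu : ‖(t : ℂ) * u‖ = t * ‖u‖ := by
    rw [norm_mul, Complex.norm_real, Real.norm_of_nonneg ht]
  have hlow : 1 - t * ‖u‖ ≤ ‖1 - (t : ℂ) * u‖ := by
    have := norm_sub_norm_le (1 : ℂ) ((t : ℂ) * u)
    rwa [norm_one, htu] at this
  have hlow₁ : 1 - ‖u‖ ≤ ‖1 - u‖ := by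
    simpa using norm_sub_norm_le (1 : ℂ) u
  have htri : ‖1 - u‖ ≤ ‖1 - (t : ℂ) * u‖ + |t - 1| * ‖u‖ := by
    calc ‖1 - u‖ = ‖(1 - (t : ℂ) * u) + ((t - 1 : ℝ) : ℂ) * u‖ := by push_cast; ring_nf
      _ ≤ ‖1 - (t : ℂ) * u‖ + ‖((t - 1 : ℝ) : ℂ) * u‖ := norm_add_le _ _
      _ = ‖1 - (t : ℂ) * u‖ + |t - 1| * ‖u‖ := by rw [norm_mul, Complex.norm_real, Real.norm_eq_abs]
  rcases le_or_gt t 1 with ht1 | ht1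
  · rw [abs_of_nonpos (by linarith)] at htri
    nlinarith [norm_nonneg u]
  · rw [abs_of_pos (by linarith)] at htri
    have htm : t * m ^ 2 ≤ (1 + m) ^ 2 / 4 := by
      have := mul_le_mul hLm hLm (by positivity) (by linarith)
      nlinarith
    have : 2 * ((t - 1) * ‖u‖) ≤ 1 - ‖u‖ := by
      nlinarith [mul_le_mul_of_nonneg_left hu (by linarith : (0 : ℝ) ≤ 2 * t - 1),
        sq_nonneg (m - 1)]
    linarith

lemma pseudoDist_mul_mul_le {lam z w : ℂ} {m : ℝ} (hzm : ‖z‖ ≤ m) (hwm : ‖w‖ ≤ m) (hm1 : m < 1)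
    (hLm : ‖lam‖ * m ≤ (1 + m) / 2) :
    pseudoDist (lam * z) (lam * w) ≤ 2 * ‖lam‖ * pseudoDist z w := by
  have hm : 0 ≤ m := (norm_nonneg z).trans hzm
  have hu : ‖conj z * w‖ ≤ m ^ 2 := by
    rw [norm_mul, Complex.norm_conj, sq]
    exact mul_le_mul hzm hwm (norm_nonneg w) hm
  have hkey := norm_one_sub_le_two_mul_norm_one_sub_sq_mul (norm_nonneg lam) hm hm1 hu hLm
  have hpos : 0 < ‖1 - conj z * w‖ := by
    have := norm_sub_norm_le (1 : ℂ) (conj z * w)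
    rw [norm_one] at this
    nlinarith
  rw [pseudoDist_mul_mul, pseudoDist, norm_div, mul_div_assoc, mul_comm 2, mul_assoc]
  gcongr ‖lam‖ * ?_
  calc ‖z - w‖ / ‖1 - ((‖lam‖ ^ 2 : ℝ) : ℂ) * (conj z * w)‖
      ≤ ‖z - w‖ / (‖1 - conj z * w‖ / 2) := by gcongr; linarith
    _ = 2 * (‖z - w‖ / ‖1 - conj z * w‖) := by ring

theorem stmt3_general (z w lam : ℂ) (hz : ‖z‖ < 1) (hw : ‖w‖ < 1)
    (hlam : ‖lam‖ ≤
      (1 + max (‖z‖) (‖w‖)) / (2 * max (‖z‖) (‖w‖))) :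
    ‖lam * z‖ < 1 ∧ ‖lam * w‖ < 1 ∧
      pseudoDist (lam * z) (lam * w) ≤ 2 * ‖lam‖ * pseudoDist z w := by
  set m := max ‖z‖ ‖w‖
  have hm1 : m < 1 := max_lt hz hw
  have hLm : ‖lam‖ * m ≤ (1 + m) / 2 :=
    mul_le_of_le_div_two_mul ((norm_nonneg z).trans (le_max_left _ _)) hlam
  have hnorm_lt {x : ℂ} (hx : ‖x‖ ≤ m) : ‖lam * x‖ < 1 := by
    rw [norm_mul]
    nlinarith [mul_le_mul_of_nonneg_left hx (norm_nonneg lam)]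
  exact ⟨hnorm_lt (le_max_left _ _), hnorm_lt (le_max_right _ _),
    pseudoDist_mul_mul_le (le_max_left _ _) (le_max_right _ _) hm1 hLm⟩

theorem stmt3 (z w lam : ℂ) (hz : ‖z‖ < 1) (hw : ‖w‖ < 1)
    (hmax : 0 < max (‖z‖) (‖w‖))
    (hlam : ‖lam‖ ≤
      (1 + max (‖z‖) (‖w‖)) / (2 * max (‖z‖) (‖w‖))) :
    ‖lam * z‖ < 1 ∧ ‖lam * w‖ < 1 ∧
      pseudoDist (lam * z) (lam * w) ≤ 2 * ‖lam‖ * pseudoDist z w :=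
  stmt3_general z w lam hz hw hlam
end

section
/- Let E be a complex Hilbert space and x, y ∈ E with ‖x‖ < 1, ‖y‖ < 1 and x ≠ y. Write r = ‖x‖, s = ‖y‖, p = ⟨x,y⟩, A = ‖x - y‖² and B = r²s² - |p|². Then A ≥ B, and moreover A * |1 - p|² ≤ 4 * (A - B). -/
/-!
With `r = ‖x‖`, `s = ‖y‖`, `p = ⟪y, x⟫` and `u = Re p` one has `‖x - y‖² = r² + s² - 2u` and
`‖1 - p‖² = 1 - 2u + ‖p‖²`, so `A - B = ‖1 - p‖² - (1 - r²)(1 - s²)`. Cauchy–Schwarz gives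
`‖p‖ ≤ rs`, hence `‖1 - p‖ ≥ 1 - rs`, and `(1 - rs)² - (1 - r²)(1 - s²) = (r - s)² ≥ 0`.
For the second inequality, `4(A - B) - A‖1 - p‖²` is the sum of `(‖p‖² - u²)(4 - A)`,
`(r - s)²(4 - (1 - u)²)` and `2(rs - u)(3 - u² - 2rs)`, each nonnegative since `|u| ≤ ‖p‖ ≤ rs < 1`.
-/

namespace Complex

theorem norm_one_sub_sq (p : ℂ) : ‖1 - p‖ ^ 2 = 1 - 2 * p.re + ‖p‖ ^ 2 := by
  rw [Complex.sq_norm, Complex.sq_norm, normSq_sub, normSq_one, one_mul, conj_re]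
  ring

variable {r s : ℝ} {p : ℂ}

theorem one_sub_sq_mul_one_sub_sq_le_norm_one_sub_sq (hs : 0 ≤ s) (hr1 : r ≤ 1) (hs1 : s ≤ 1)
    (hp : ‖p‖ ≤ r * s) :
    (1 - r ^ 2) * (1 - s ^ 2) ≤ ‖1 - p‖ ^ 2 :=
  have hrs : r * s ≤ 1 := mul_le_one₀ hr1 hs hs1
  calc (1 - r ^ 2) * (1 - s ^ 2) ≤ (1 - r * s) ^ 2 := by nlinarith [sq_nonneg (r - s)]
    _ ≤ (1 - ‖p‖) ^ 2 := by gcongr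
    _ ≤ ‖1 - p‖ ^ 2 := by
      gcongr
      · linarith
      · simpa using norm_sub_norm_le (1 : ℂ) p

theorem mul_norm_one_sub_sq_le (hr : 0 ≤ r) (hs : 0 ≤ s) (hr1 : r < 1) (hs1 : s < 1)
    (hp : ‖p‖ ≤ r * s) :
    (r ^ 2 + s ^ 2 - 2 * p.re) * ‖1 - p‖ ^ 2 ≤
      4 * (‖1 - p‖ ^ 2 - (1 - r ^ 2) * (1 - s ^ 2)) := by
  set u := p.re
  have hrs : r * s < 1 := by nlinarith
  have hu : |u| ≤ r * s := (abs_re_le_norm p).trans hp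
  have hu_le : u ≤ r * s := le_of_abs_le hu
  have hu_ge : -(r * s) ≤ u := neg_le_of_abs_le hu
  have him : 0 ≤ ‖p‖ ^ 2 - u ^ 2 := (sq_norm_sub_sq_re p).symm ▸ sq_nonneg p.im
  have hA : 0 ≤ 4 - (r ^ 2 + s ^ 2 - 2 * u) := by nlinarith
  have h1u : 0 ≤ 4 - (1 - u) ^ 2 := by nlinarith
  have hrsu : 0 ≤ 2 * (r * s - u) * (3 - u ^ 2 - 2 * (r * s)) := by
    apply mul_nonneg <;> nlinarith
  have key : 4 * (‖1 - p‖ ^ 2 - (1 - r ^ 2) * (1 - s ^ 2)) -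
      (r ^ 2 + s ^ 2 - 2 * u) * ‖1 - p‖ ^ 2 =
      (‖p‖ ^ 2 - u ^ 2) * (4 - (r ^ 2 + s ^ 2 - 2 * u)) + (r - s) ^ 2 * (4 - (1 - u) ^ 2) +
        2 * (r * s - u) * (3 - u ^ 2 - 2 * (r * s)) := by
    rw [norm_one_sub_sq]; ring
  linarith [mul_nonneg him hA, mul_nonneg (sq_nonneg (r - s)) h1u]

end Complex

theorem stmt5_general {E : Type*} [NormedAddCommGroup E] [InnerProductSpace ℂ E]
    (x y : E) (hx : ‖x‖ < 1) (hy : ‖y‖ < 1) :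
    (‖x‖^2 * ‖y‖^2 - ‖(inner ℂ y x : ℂ)‖^2 ≤ ‖x - y‖^2) ∧
    ‖x - y‖^2 * ‖1 - (inner ℂ y x : ℂ)‖^2 ≤
      4 * (‖x - y‖^2 - (‖x‖^2 * ‖y‖^2 - ‖(inner ℂ y x : ℂ)‖^2)) := by
  set p : ℂ := inner ℂ y x
  have hp : ‖p‖ ≤ ‖x‖ * ‖y‖ := (norm_inner_le_norm y x).trans_eq (mul_comm _ _)
  have hdist : ‖x - y‖ ^ 2 = ‖x‖ ^ 2 + ‖y‖ ^ 2 - 2 * p.re := by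
    rw [norm_sub_sq (𝕜 := ℂ), inner_re_symm, RCLike.re_to_complex]; ring
  have hAB := Complex.one_sub_sq_mul_one_sub_sq_le_norm_one_sub_sq (norm_nonneg y)
    hx.le hy.le hp
  have hmain := Complex.mul_norm_one_sub_sq_le (norm_nonneg x) (norm_nonneg y) hx hy hp
  have h1p := Complex.norm_one_sub_sq p
  rw [hdist]
  constructor <;> linarith

theorem stmt5 {E : Type*} [NormedAddCommGroup E] [InnerProductSpace ℂ E]
    (x y : E) (hx : ‖x‖ < 1) (hy : ‖y‖ < 1) (hxy : x ≠ y) :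
    (‖x‖^2 * ‖y‖^2 - ‖(inner ℂ y x : ℂ)‖^2 ≤ ‖x - y‖^2) ∧
    ‖x - y‖^2 * ‖1 - (inner ℂ y x : ℂ)‖^2 ≤
      4 * (‖x - y‖^2 - (‖x‖^2 * ‖y‖^2 - ‖(inner ℂ y x : ℂ)‖^2)) :=
  stmt5_general x y hx hy
end

section
/- Let E be a complex Hilbert space, x, y in the open unit ball of E, and z ∈ ℂ with |z| ≤ (1 + max(‖x‖,‖y‖)) / (2 max(‖x‖,‖y‖)) (assuming max(‖x‖,‖y‖) > 0). Then zx, zy lie in the open unit ball and ρ_E(zx, zy) ≤ 2 |z| ρ_E(x, y), where ρ_E is the pseudohyperbolic distance determined by ρ_E(u,v)² = 1 - (1-‖u‖²)(1-‖v‖²)/|1 - ⟨u,v⟩|². -/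
set_option maxHeartbeats 1000000

private lemma lemF0 (a b u t : ℝ) (ha : 0 ≤ a) (hb : 0 ≤ b) (ha1 : a ≤ 1) (hb1 : b ≤ 1)
    (hu0 : 0 ≤ u) (hu1 : u ≤ 1) (hab2u : 2*u ≤ a+b) (huab : u^2 ≤ a*b)
    (hD0 : 0 ≤ a+b-2*u - (a*b - u^2))
    (ht : 0 ≤ t) (h14 : t ≤ 1/4) :
    (a+b-2*u)*(1-u)^2 ≤ 4*(a+b-2*u-(a*b-u^2))*(1-t*u)^2 := by
  have h1 : 4*(a*b-u^2)*(1-u)^2 ≤ 3*(a+b-2*u-(a*b-u^2))*(4-u^2) := by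
    nlinarith [sq_nonneg (a-b), mul_nonneg (mul_nonneg (by linarith : (0:ℝ) ≤ 1-u) (by linarith : (0:ℝ) ≤ 1-u)) (by linarith : (0:ℝ) ≤ a+b-2*u), mul_nonneg (by linarith : (0:ℝ) ≤ a+b-2*u) (by linarith : (0:ℝ) ≤ 1-u), mul_nonneg (mul_nonneg ha hb) (by linarith : (0:ℝ) ≤ 1-u), sq_nonneg (a+b-2*u), mul_nonneg (by linarith : (0:ℝ) ≤ a*b - u^2) (by linarith : (0:ℝ) ≤ 1-u)]
  have h2 : 0 ≤ (1-t*u) - (1-u/4) := by nlinarith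
  have h3 : 0 ≤ (1-t*u) + (1-u/4) := by nlinarith
  nlinarith [mul_nonneg hD0 (mul_nonneg h2 h3)]

private lemma lemF1 (a b u t : ℝ) (ha : 0 ≤ a) (hb : 0 ≤ b) (ha1 : a ≤ 1) (hb1 : b ≤ 1)
    (hu0 : 0 ≤ u) (hu1 : u ≤ 1) (hab2u : 2*u ≤ a+b) (huab : u^2 ≤ a*b)
    (hD0 : 0 ≤ a+b-2*u - (a*b - u^2)) (ht : 0 ≤ t) :
    ((a+b-2*u)+4*u)*(1+u)^2 ≤ 4*((a+b-2*u-(a*b-u^2))+4*u)*(1+t*u)^2 := by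
  have h1 : ((a+b-2*u)+4*u)*(1+u)^2 ≤ 4*((a+b-2*u-(a*b-u^2))+4*u) := by
    nlinarith [sq_nonneg (a-b), mul_nonneg (by linarith : (0:ℝ) ≤ a+b-2*u) (by linarith : (0:ℝ) ≤ 1-u), mul_nonneg (mul_nonneg ha hb) (by linarith : (0:ℝ) ≤ 1-u), mul_nonneg (by linarith : (0:ℝ) ≤ a*b - u^2) (by linarith : (0:ℝ) ≤ 1-u), mul_nonneg hu0 (by linarith : (0:ℝ) ≤ 1-u), mul_nonneg (mul_nonneg hu0 hu0) (by linarith : (0:ℝ) ≤ 1-u), mul_nonneg hD0 hu0]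
  have h2 : (1:ℝ) ≤ (1+t*u)^2 := by nlinarith [mul_nonneg ht hu0]
  have h4 : (0:ℝ) ≤ 4*((a+b-2*u-(a*b-u^2))+4*u) := by
    nlinarith [mul_nonneg hu0 (by linarith : (0:ℝ) ≤ 1-u)]
  nlinarith [mul_nonneg h4 (by linarith : (0:ℝ) ≤ (1+t*u)^2 - 1)]

private lemma lemcomb (a b u e t : ℝ) (hu : 0 < u) (he0 : 0 ≤ e) (he2 : e ≤ 2*u)
    (ht : 0 ≤ t) (h14 : t ≤ 1/4)
    (hF0 : (a+b-2*u)*(1-u)^2 ≤ 4*(a+b-2*u-(a*b-u^2))*(1-t*u)^2)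
    (hF1 : ((a+b-2*u)+4*u)*(1+u)^2 ≤ 4*((a+b-2*u-(a*b-u^2))+4*u)*(1+t*u)^2) :
    (a+b-2*(u-e)) * ((1-u)^2 + 2*e)
      ≤ 4*((a+b-2*(u-e)) - (a*b - u^2)) * ((1-t*u)^2 + 2*t*e) := by
  have hcomb : 0 ≤ 2*u*(4-16*t)*(e*(2*u-e)) := by
    have h1 : 0 ≤ 4 - 16*t := by linarith
    have h2 : 0 ≤ 2*u - e := by linarith
    positivity
  have hh0 : 0 ≤ (2*u-e)*(4*(a+b-2*u-(a*b-u^2))*(1-t*u)^2 - (a+b-2*u)*(1-u)^2) :=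
    mul_nonneg (by linarith) (by linarith)
  have hh1 : 0 ≤ e*(4*((a+b-2*u-(a*b-u^2))+4*u)*(1+t*u)^2 - ((a+b-2*u)+4*u)*(1+u)^2) :=
    mul_nonneg he0 (by linarith)
  have hgoal : 2*u*((a+b-2*(u-e)) * ((1-u)^2 + 2*e))
      ≤ 2*u*(4*((a+b-2*(u-e)) - (a*b - u^2)) * ((1-t*u)^2 + 2*t*e)) := by
    nlinarith [hh0, hh1, hcomb]
  exact le_of_mul_le_mul_left hgoal (by linarith)

private lemma lemSP (a b u e t : ℝ) (ha : 0 ≤ a) (hb : 0 ≤ b) (ha1 : a ≤ 1) (hb1 : b ≤ 1)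
    (hu0 : 0 ≤ u) (hu1 : u ≤ 1) (hab2u : 2*u ≤ a+b) (huab : u^2 ≤ a*b)
    (hD0 : 0 ≤ a+b-2*u - (a*b - u^2)) (he0 : 0 ≤ e)
    (ht : 0 ≤ t) (h1t : t ≤ 1) (h14 : 1/4 ≤ t) :
    ((a+b-2*(u-e)) - t*(a*b - u^2)) * ((1-u)^2 + 2*e)
      ≤ 4*((a+b-2*(u-e)) - (a*b - u^2)) * ((1-t*u)^2 + 2*t*e) := by
  have hc0 : 0 ≤ (1-u)^2 + 2*e - (1-a)*(1-b) := by nlinarith [hD0]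
  have hc0c2 : 0 ≤ ((1-u)^2 + 2*e)*(1-a*b) - (1-a)*(1-b)*(1-u^2) := by
    have h1 : 0 ≤ (1-u)*(1-a*b) - (1-a)*(1-b)*(1+u) := by
      nlinarith [sq_nonneg (a-b), mul_nonneg (by linarith : (0:ℝ) ≤ a+b-2*u) (by linarith : (0:ℝ) ≤ 2-(a+b))]
    nlinarith [mul_nonneg (by linarith : (0:ℝ) ≤ 1-u) h1, mul_nonneg he0 (by nlinarith : (0:ℝ) ≤ 1-a*b)]
  have hPhi : 0 ≤ (1-t*a)*(1-t*b)*((1-u)^2+2*e) - (1-a)*(1-b)*((1-t*u)^2+2*t*e) := by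
    nlinarith [mul_nonneg (mul_nonneg (by linarith : (0:ℝ) ≤ 1-t) (by linarith : (0:ℝ) ≤ 1-t)) hc0,
      mul_nonneg (mul_nonneg (by linarith : (0:ℝ) ≤ 1-t) ht) hc0c2]
  have hSP : t*(((a+b-2*(u-e)) - t*(a*b-u^2))*((1-u)^2+2*e))
      ≤ ((a+b-2*(u-e)) - (a*b-u^2))*((1-t*u)^2+2*t*e) := by nlinarith [hPhi]
  have hABqt : 0 ≤ ((a+b-2*(u-e)) - (a*b-u^2))*((1-t*u)^2+2*t*e) := by
    have h5 : 0 ≤ (a+b-2*(u-e)) - (a*b-u^2) := by linarith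
    have h6 : 0 ≤ (1-t*u)^2+2*t*e := by positivity
    positivity
  nlinarith [hSP, hABqt]

private lemma lemBig (a b u e m t : ℝ)
    (hu0 : 0 ≤ u) (hu1 : u ≤ m^2) (hm0 : 0 < m) (hm1 : m < 1)
    (huab : u^2 ≤ a*b) (hB : 0 ≤ a*b - u^2)
    (hD0 : 0 ≤ a+b-2*u - (a*b - u^2)) (he0 : 0 ≤ e)
    (ht : 1 ≤ t) (htm : 4*(m^2*t) ≤ (1+m)^2) :
    ((a+b-2*(u-e)) - t*(a*b - u^2)) * ((1-u)^2 + 2*e)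
      ≤ 4*((a+b-2*(u-e)) - (a*b - u^2)) * ((1-t*u)^2 + 2*t*e) := by
  have hu1' : u ≤ 1 := by nlinarith
  have h2tu : (2*t-1)*u ≤ 1 := by
    have h1 : (2*t-1)*u ≤ (2*t-1)*m^2 := by nlinarith
    nlinarith [sq_nonneg (1-m)]
  have htu1 : t*u < 1 := by nlinarith [sq_nonneg (1-m), mul_nonneg (by linarith : (0:ℝ) ≤ t) hu0]
  have hq14 : (1-u)^2 + 2*e ≤ 4*((1-t*u)^2 + 2*t*e) := by
    have h1 : 1-u ≤ 2*(1-t*u) := by nlinarith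
    have h2 : (0:ℝ) ≤ 1 - t*u := by linarith
    nlinarith [mul_nonneg he0 (by linarith : (0:ℝ) ≤ t-1), sq_nonneg (1-u)]
  have hq1 : (0:ℝ) ≤ (1-u)^2 + 2*e := by positivity
  nlinarith [mul_nonneg (mul_nonneg (by linarith : (0:ℝ) ≤ t-1) hB) hq1,
    mul_nonneg hD0 (by linarith : (0:ℝ) ≤ 4*((1-t*u)^2 + 2*t*e) - ((1-u)^2+2*e)),
    mul_nonneg (mul_nonneg he0 (by norm_num : (0:ℝ) ≤ 2)) (by linarith : (0:ℝ) ≤ 4*((1-t*u)^2 + 2*t*e) - ((1-u)^2+2*e))]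

private lemma key2 (a b u e m t : ℝ) (ha : 0 ≤ a) (hb : 0 ≤ b) (ha1 : a ≤ 1) (hb1 : b ≤ 1)
    (hu0 : 0 ≤ u) (hu1 : u ≤ m^2) (hm0 : 0 < m) (hm1 : m < 1)
    (huab : u^2 ≤ a*b) (hab2u : 2*u ≤ a+b)
    (he0 : 0 ≤ e) (he2 : e ≤ 2*u)
    (ht : 0 ≤ t) (htm : 4*(m^2*t) ≤ (1+m)^2) :
    ((a+b-2*(u-e)) - t*(a*b - u^2)) * ((1-u)^2 + 2*e)
      ≤ 4*((a+b-2*(u-e)) - (a*b - u^2)) * ((1-t*u)^2 + 2*t*e) := by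
  have hu1' : u ≤ 1 := by nlinarith
  have hB : 0 ≤ a*b - u^2 := by linarith
  have hD0 : 0 ≤ a+b-2*u - (a*b - u^2) := by
    nlinarith [sq_nonneg (a-b), mul_nonneg (by linarith : (0:ℝ) ≤ a+b-2*u)
      (by nlinarith : (0:ℝ) ≤ 2 - u - (a+b)/2)]
  rcases le_or_gt t (1/4) with h14 | h14
  · have hstep : (a+b-2*(u-e)) * ((1-u)^2 + 2*e)
        ≤ 4*((a+b-2*(u-e)) - (a*b - u^2)) * ((1-t*u)^2 + 2*t*e) := by
      rcases eq_or_lt_of_le hu0 with hu | hu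
      · have he : e = 0 := le_antisymm (by linarith) he0
        subst he
        rw [← hu]
        nlinarith [sq_nonneg (a-b), mul_nonneg ht (sq_nonneg u)]
      · exact lemcomb a b u e t hu he0 he2 ht h14
          (lemF0 a b u t ha hb ha1 hb1 hu0 hu1' hab2u huab hD0 ht h14)
          (lemF1 a b u t ha hb ha1 hb1 hu0 hu1' hab2u huab hD0 ht)
    have hpos : 0 ≤ t*(a*b-u^2) * ((1-u)^2 + 2*e) := by positivity
    nlinarith [hstep, hpos]
  · rcases le_or_gt t 1 with h1t | h1t
    · exact lemSP a b u e t ha hb ha1 hb1 hu0 hu1' hab2u huab hD0 he0 ht h1t (le_of_lt h14)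
    · exact lemBig a b u e m t hu0 hu1 hm0 hm1 huab hB hD0 he0 (le_of_lt h1t) htm

private lemma key (a b r s m t : ℝ) (ha : 0 ≤ a) (hb : 0 ≤ b) (ham : a ≤ m^2) (hbm : b ≤ m^2)
    (hm0 : 0 < m) (hm1 : m < 1) (hcs : r^2 + s^2 ≤ a*b) (ht : 0 ≤ t)
    (htm : 4*(m^2*t) ≤ (1+m)^2) :
    ((1-t*r)^2+(t*s)^2 - (1-t*a)*(1-t*b)) * ((1-r)^2+s^2)
      ≤ 4*t*(((1-r)^2+s^2 - (1-a)*(1-b)) * ((1-t*r)^2+(t*s)^2)) := by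
  have hm2 : (0:ℝ) < m^2 := by positivity
  have ha1 : a ≤ 1 := by nlinarith
  have hb1 : b ≤ 1 := by nlinarith
  have hu0 : 0 ≤ Real.sqrt (r^2+s^2) := Real.sqrt_nonneg _
  set u := Real.sqrt (r^2+s^2) with hudef
  have hu2 : u^2 = r^2+s^2 := Real.sq_sqrt (by positivity)
  have hru : r ≤ u := by
    calc r ≤ |r| := le_abs_self r
    _ = Real.sqrt (r^2) := (Real.sqrt_sq_eq_abs r).symm
    _ ≤ u := Real.sqrt_le_sqrt (by nlinarith [sq_nonneg s])
  have hmr : -u ≤ r := by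
    have h1 : -r ≤ |r| := by rw [← abs_neg]; exact le_abs_self (-r)
    have h2 : |r| ≤ u := by
      calc |r| = Real.sqrt (r^2) := (Real.sqrt_sq_eq_abs r).symm
      _ ≤ u := Real.sqrt_le_sqrt (by nlinarith [sq_nonneg s])
    linarith
  have huab : u^2 ≤ a*b := by rw [hu2]; exact hcs
  have hu1 : u ≤ m^2 := by
    nlinarith [huab, mul_le_mul ham hbm hb (le_of_lt hm2)]
  have hab2u : 2*u ≤ a+b := by nlinarith [huab, sq_nonneg (a-b)]
  have h := key2 a b u (u - r) m t ha hb ha1 hb1 hu0 hu1 hm0 hm1 huab hab2u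
    (by linarith) (by linarith) ht htm
  have e1 : (1-r)^2+s^2 = (1-u)^2+2*(u-r) := by linear_combination -hu2
  have e2 : (1-t*r)^2+(t*s)^2 = (1-t*u)^2+2*t*(u-r) := by linear_combination (-t^2)*hu2
  rw [e1, e2]
  nlinarith [mul_le_mul_of_nonneg_left h ht]

private lemma lemDrs (a b r s : ℝ) (ha : 0 ≤ a) (hb : 0 ≤ b) (ha1 : a ≤ 1) (hb1 : b ≤ 1)
    (hcs : r^2+s^2 ≤ a*b) : (1-a)*(1-b) ≤ (1-r)^2+s^2 := by
  have hu0 : 0 ≤ Real.sqrt (r^2+s^2) := Real.sqrt_nonneg _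
  set u := Real.sqrt (r^2+s^2) with hudef
  have hu2 : u^2 = r^2+s^2 := Real.sq_sqrt (by positivity)
  have hru : r ≤ u := by
    calc r ≤ |r| := le_abs_self r
    _ = Real.sqrt (r^2) := (Real.sqrt_sq_eq_abs r).symm
    _ ≤ u := Real.sqrt_le_sqrt (by nlinarith [sq_nonneg s])
  have huab : u^2 ≤ a*b := by rw [hu2]; exact hcs
  have hu1' : u ≤ 1 := by nlinarith
  have hab2u : 2*u ≤ a+b := by nlinarith [huab, sq_nonneg (a-b)]
  have hD0 : 0 ≤ a+b-2*u - (a*b - u^2) := by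
    nlinarith [sq_nonneg (a-b), mul_nonneg (by linarith : (0:ℝ) ≤ a+b-2*u)
      (by nlinarith : (0:ℝ) ≤ 2 - u - (a+b)/2)]
  nlinarith [hD0, hru, hu2]

/-- The pseudohyperbolic distance on the open unit ball of a complex Hilbert space,
determined by `ρ_E(u,v)² = 1 - (1-‖u‖²)(1-‖v‖²)/|1-⟨u,v⟩|²` (the inner product being
linear in its first variable). -/
noncomputable def rhoE {E : Type*} [NormedAddCommGroup E] [InnerProductSpace ℂ E]
    (u v : E) : ℝ :=
  Real.sqrt (1 - (1 - ‖u‖^2) * (1 - ‖v‖^2) / ‖(1 - (inner ℂ v u : ℂ))‖^2)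

theorem stmt6 {E : Type*} [NormedAddCommGroup E] [InnerProductSpace ℂ E]
    (x y : E) (hx : ‖x‖ < 1) (hy : ‖y‖ < 1) (hmax : 0 < max ‖x‖ ‖y‖) (z : ℂ)
    (hz : ‖z‖ ≤ (1 + max ‖x‖ ‖y‖) / (2 * max ‖x‖ ‖y‖)) :
    ‖z • x‖ < 1 ∧ ‖z • y‖ < 1 ∧ rhoE (z • x) (z • y) ≤ 2 * ‖z‖ * rhoE x y := by
  set M := max ‖x‖ ‖y‖ with hMdef
  have hM1 : M < 1 := max_lt hx hy
  have hZ0 : 0 ≤ ‖z‖ := norm_nonneg z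
  have hzM : ‖z‖ * M ≤ (1+M)/2 := by
    have h := mul_le_mul_of_nonneg_right hz (le_of_lt hmax)
    have h2 : (1+M)/(2*M)*M = (1+M)/2 := by
      field_simp
    rw [h2] at h
    exact h
  have hnzx : ‖z • x‖ < 1 := by
    rw [norm_smul]
    have h1 : ‖z‖ * ‖x‖ ≤ ‖z‖ * M :=
      mul_le_mul_of_nonneg_left (le_max_left _ _) hZ0
    linarith
  have hnzy : ‖z • y‖ < 1 := by
    rw [norm_smul]
    have h1 : ‖z‖ * ‖y‖ ≤ ‖z‖ * M :=
      mul_le_mul_of_nonneg_left (le_max_right _ _) hZ0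
    linarith
  refine ⟨hnzx, hnzy, ?_⟩
  set Z := ‖z‖ with hZdef
  set r := (inner ℂ y x : ℂ).re with hrdef
  set s := (inner ℂ y x : ℂ).im with hsdef
  set a := ‖x‖^2 with hadef
  set b := ‖y‖^2 with hbdef
  have hM0 : 0 < M := hmax
  have ha : 0 ≤ a := sq_nonneg _
  have hb : 0 ≤ b := sq_nonneg _
  have ham : a ≤ M^2 := by
    rw [hadef]; exact pow_le_pow_left₀ (norm_nonneg x) (le_max_left _ _) 2
  have hbm : b ≤ M^2 := by
    rw [hbdef]; exact pow_le_pow_left₀ (norm_nonneg y) (le_max_right _ _) 2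
  have habs : ‖(inner ℂ y x : ℂ)‖ ≤ ‖y‖ * ‖x‖ := by
    have := norm_inner_le_norm (𝕜 := ℂ) y x
    exact this
  have hrs : r^2 + s^2 = ‖(inner ℂ y x : ℂ)‖^2 := by
    rw [Complex.sq_norm, Complex.normSq_apply]; ring
  have hcs : r^2 + s^2 ≤ a*b := by
    rw [hrs]
    calc ‖(inner ℂ y x : ℂ)‖^2 ≤ (‖y‖*‖x‖)^2 := by
          exact pow_le_pow_left₀ (norm_nonneg _) habs 2
    _ = a*b := by rw [hadef, hbdef]; ring
  have hrM : r ≤ M^2 := by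
    calc r ≤ ‖(inner ℂ y x : ℂ)‖ := Complex.re_le_norm _
    _ ≤ ‖y‖ * ‖x‖ := habs
    _ ≤ M * M := mul_le_mul (le_max_right _ _) (le_max_left _ _) (norm_nonneg x) (le_of_lt hM0)
    _ = M^2 := by ring
  have ht : 0 ≤ Z^2 := sq_nonneg _
  have htm : 4*(M^2*Z^2) ≤ (1+M)^2 := by nlinarith [hzM, mul_nonneg hZ0 (le_of_lt hM0)]
  -- key inequality instance
  have hkey := key a b r s M (Z^2) ha hb ham hbm hM0 hM1 hcs ht htm
  -- positivity of denominators
  have hQ1pos : (0:ℝ) < (1-r)^2+s^2 := by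
    have h1 : (0:ℝ) < (1-r)^2 := by
      have hr1 : r < 1 := by nlinarith
      have : (0:ℝ) < 1 - r := by linarith
      positivity
    nlinarith [sq_nonneg s]
  have htr : Z^2*r < 1 := by
    have h1 : Z^2*r ≤ Z^2*M^2 := by nlinarith
    nlinarith [sq_nonneg (1-M)]
  have hQtpos : (0:ℝ) < (1-Z^2*r)^2+(Z^2*s)^2 := by
    have h1 : (0:ℝ) < (1-Z^2*r)^2 := by
      have : (0:ℝ) < 1 - Z^2*r := by linarith
      positivity
    nlinarith [sq_nonneg (Z^2*s)]
  have ha1 : a ≤ 1 := by nlinarith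
  have hb1 : b ≤ 1 := by nlinarith
  have hD : (1-a)*(1-b) ≤ (1-r)^2+s^2 := lemDrs a b r s ha hb ha1 hb1 hcs
  -- rewrite rhoE (z•x) (z•y)
  have hinner : (inner ℂ (z•y) (z•x) : ℂ) = ((Z^2 : ℝ) : ℂ) * inner ℂ y x := by
    rw [inner_smul_left, inner_smul_right, ← mul_assoc]
    congr 1
    rw [mul_comm, Complex.mul_conj]
    norm_cast
    exact (Complex.sq_norm z).symm
  have habst : ‖(1 - (inner ℂ (z•y) (z•x) : ℂ))‖^2 = (1-Z^2*r)^2+(Z^2*s)^2 := by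
    rw [hinner, Complex.sq_norm, Complex.normSq_apply]
    simp [Complex.sub_re, Complex.sub_im, Complex.mul_re, Complex.mul_im,
      Complex.ofReal_re, Complex.ofReal_im, -Complex.ofReal_pow]
    ring
  have habs1 : ‖(1 - (inner ℂ y x : ℂ))‖^2 = (1-r)^2+s^2 := by
    rw [Complex.sq_norm, Complex.normSq_apply]
    simp [Complex.sub_re, Complex.sub_im]
    ring
  have hnx : ‖z • x‖^2 = Z^2 * a := by rw [norm_smul, mul_pow]
  have hny : ‖z • y‖^2 = Z^2 * b := by rw [norm_smul, mul_pow]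
  have eL : rhoE (z•x) (z•y)
      = Real.sqrt (1 - (1 - Z^2*a)*(1 - Z^2*b)/((1-Z^2*r)^2+(Z^2*s)^2)) := by
    rw [rhoE, hnx, hny, habst]
  have eR : rhoE x y = Real.sqrt (1 - (1-a)*(1-b)/((1-r)^2+s^2)) := by
    rw [rhoE, habs1]
  rw [eL, eR]
  have hRnn : 0 ≤ 1 - (1-a)*(1-b)/((1-r)^2+s^2) := by
    rw [sub_nonneg, div_le_one hQ1pos]
    exact hD
  have h2Z : 2 * Z * Real.sqrt (1 - (1-a)*(1-b)/((1-r)^2+s^2))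
      = Real.sqrt (4*Z^2*(1 - (1-a)*(1-b)/((1-r)^2+s^2))) := by
    rw [show 4*Z^2*(1 - (1-a)*(1-b)/((1-r)^2+s^2))
        = (2*Z)^2*(1 - (1-a)*(1-b)/((1-r)^2+s^2)) by ring,
      Real.sqrt_mul (by positivity), Real.sqrt_sq (by positivity)]
  rw [h2Z]
  apply Real.sqrt_le_sqrt
  have expand1 : 1 - (1 - Z^2*a)*(1 - Z^2*b)/((1-Z^2*r)^2+(Z^2*s)^2)
      = ((1-Z^2*r)^2+(Z^2*s)^2 - (1 - Z^2*a)*(1 - Z^2*b))/((1-Z^2*r)^2+(Z^2*s)^2) := by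
    rw [sub_div, div_self hQtpos.ne']
  have expand2 : 4*Z^2*(1 - (1-a)*(1-b)/((1-r)^2+s^2))
      = (4*Z^2*(((1-r)^2+s^2 - (1-a)*(1-b))))/((1-r)^2+s^2) := by
    field_simp
  rw [expand1, expand2, div_le_div_iff₀ hQtpos hQ1pos]
  exact hkey.trans (le_of_eq (by ring))
end

section
/- Let E be a complex Hilbert space, z ∈ ℂ, and x, y in the open unit ball of E with max(‖x‖,‖y‖) > 0 and |z| ≤ (1 + max(‖x‖,‖y‖))/(2 max(‖x‖,‖y‖)). Then |1 - ⟨x,y⟩| ≤ 2 |1 - |z|² ⟨x,y⟩|. -/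
/-! Write `w = ⟪y, x⟫` and `s = |z|²`. Since `1 - w = (1 - s w) + (s - 1) w`, it suffices to show
`|s - 1| |w| ≤ 1 - s |w|`, because the right-hand side is at most `|1 - s w|`. For `s ≤ 1` this is
`|w| ≤ 1`; for `s > 1` it is `(2s - 1) |w| ≤ 1`, which follows from `|w| ≤ m²`, `m = max(‖x‖, ‖y‖)`,
and the bound `4 s m² ≤ (1 + m)²` on `s`. -/

lemma abs_sub_one_mul_le_one_sub_mul {s W m : ℝ} (hWm : W ≤ m ^ 2)
    (hm : m ^ 2 ≤ 1) (hs : s * (2 * m) ^ 2 ≤ (1 + m) ^ 2) :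
    |s - 1| * W ≤ 1 - s * W := by
  rcases le_or_gt s 1 with hs1 | hs1
  · rw [abs_of_nonpos (by linarith)]
    linarith
  · rw [abs_of_pos (by linarith)]
    have hscaled : (2 * s - 1) * W ≤ (2 * s - 1) * m ^ 2 :=
      mul_le_mul_of_nonneg_left hWm (by linarith)
    nlinarith [sq_nonneg (1 - m)]

lemma Complex.norm_one_sub_le_two_mul_norm_one_sub_ofReal_mul {w : ℂ} {s : ℝ} (hs : 0 ≤ s)
    (h : |s - 1| * ‖w‖ ≤ 1 - s * ‖w‖) : ‖1 - w‖ ≤ 2 * ‖1 - s * w‖ := by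
  have hsw : ‖(s : ℂ) * w‖ = s * ‖w‖ := by
    rw [norm_mul, Complex.norm_real, Real.norm_of_nonneg hs]
  have hdiff : ‖((s : ℂ) - 1) * w‖ = |s - 1| * ‖w‖ := by
    rw [norm_mul, ← Complex.ofReal_one, ← Complex.ofReal_sub, Complex.norm_real, Real.norm_eq_abs]
  have hlower : 1 - s * ‖w‖ ≤ ‖1 - s * w‖ := by
    simpa only [norm_one, hsw] using norm_sub_norm_le (1 : ℂ) (s * w)
  calc ‖1 - w‖ = ‖(1 - s * w) + (s - 1) * w‖ := by ring_nf
    _ ≤ ‖1 - s * w‖ + |s - 1| * ‖w‖ := hdiff ▸ norm_add_le _ _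
    _ ≤ 2 * ‖1 - s * w‖ := by linarith

theorem stmt7 {E : Type*} [NormedAddCommGroup E] [InnerProductSpace ℂ E]
    (z : ℂ) (x y : E) (hx : ‖x‖ < 1) (hy : ‖y‖ < 1) (hmax : 0 < max ‖x‖ ‖y‖)
    (hz : ‖z‖ ≤ (1 + max ‖x‖ ‖y‖) / (2 * max ‖x‖ ‖y‖)) :
    ‖(1 - (inner ℂ y x : ℂ))‖ ≤
      2 * ‖(1 - ((‖z‖ : ℂ))^2 * (inner ℂ y x : ℂ))‖ := by
  set m := max ‖x‖ ‖y‖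
  have hinner : ‖(inner ℂ y x : ℂ)‖ ≤ m ^ 2 :=
    calc ‖(inner ℂ y x : ℂ)‖ ≤ ‖y‖ * ‖x‖ := norm_inner_le_norm y x
      _ ≤ m ^ 2 := by
        rw [sq]
        exact mul_le_mul (le_max_right _ _) (le_max_left _ _) (norm_nonneg _) hmax.le
  have hm : m ^ 2 ≤ 1 := pow_le_one₀ hmax.le (max_lt hx hy).le
  have hs : ‖z‖ ^ 2 * (2 * m) ^ 2 ≤ (1 + m) ^ 2 := by
    rw [← mul_pow]
    exact pow_le_pow_left₀ (by positivity) ((le_div_iff₀ (by positivity)).mp hz) 2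
  have key := Complex.norm_one_sub_le_two_mul_norm_one_sub_ofReal_mul (sq_nonneg ‖z‖)
    (abs_sub_one_mul_le_one_sub_mul hinner hm hs)
  simpa only [Complex.ofReal_pow] using key
end

section
/- Let E be a complex Hilbert space and a ∈ E with ‖a‖ < 1. Define s_a = sqrt(1 - ‖a‖²), the orthogonal projection P_a(y) = (⟨y,a⟩/⟨a,a⟩)·a onto the span of a (when a ≠ 0), Q_a = Id - P_a, m_a(y) = (a - y)/(1 - ⟨y,a⟩), and φ_a(y) = (s_a Q_a + P_a)(m_a(y)) for y in the open unit ball. Then φ_a is an involution: φ_a(φ_a(y)) = y for all y in the open unit ball of E. -/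
/-- Orthogonal projection onto the span of `a` (interpreted as `0` when `a = 0`):
`P_a(y) = (⟨y,a⟩/⟨a,a⟩)·a`, the inner product being linear in its first variable. -/
noncomputable def projA {E : Type*} [NormedAddCommGroup E] [InnerProductSpace ℂ E]
    (a y : E) : E :=
  ((inner ℂ a y : ℂ) / (inner ℂ a a : ℂ)) • a

/-- The Möbius automorphism `φ_a = (s_a Q_a + P_a) ∘ m_a` of the open unit ball, where
`s_a = sqrt(1-‖a‖²)`, `Q_a = Id - P_a` and `m_a(y) = (a-y)/(1-⟨y,a⟩)`. -/
noncomputable def phiA {E : Type*} [NormedAddCommGroup E] [InnerProductSpace ℂ E]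
    (a y : E) : E :=
  ((Real.sqrt (1 - ‖a‖^2) : ℂ)) •
      (((1 - (inner ℂ a y : ℂ))⁻¹ • (a - y)) - projA a ((1 - (inner ℂ a y : ℂ))⁻¹ • (a - y))) +
    projA a ((1 - (inner ℂ a y : ℂ))⁻¹ • (a - y))

/-!
Mathlib's `⟪a, y⟫_ℂ` is the paper's `⟨y, a⟩`. Write `L = s_a Q_a + P_a`, so that
`φ_a y = L (a - y) / (1 - ⟨y,a⟩)`. Since `L a = a` and, as `s_a² = 1 - ‖a‖²`,
`L (L v) = (1 - ‖a‖²) v + ⟨v,a⟩ a`, one finds `a - φ_a y = (L y - ⟨y,a⟩ a) / (1 - ⟨y,a⟩)` and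
`L (a - φ_a y) = (1 - ‖a‖²) y / (1 - ⟨y,a⟩)`. Dividing by
`1 - ⟨φ_a y, a⟩ = (1 - ‖a‖²) / (1 - ⟨y,a⟩)` gives back `y`.
-/

open scoped InnerProductSpace

section
variable {E : Type*} [NormedAddCommGroup E] [InnerProductSpace ℂ E]

theorem projA_smul (a : E) (c : ℂ) (v : E) : projA a (c • v) = c • projA a v := by
  simp only [projA, inner_smul_right, mul_div_assoc, smul_smul]

theorem projA_add (a v w : E) : projA a (v + w) = projA a v + projA a w := by
  simp only [projA, inner_add_right, add_div, add_smul]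

theorem projA_sub (a v w : E) : projA a (v - w) = projA a v - projA a w := by
  simp only [projA, inner_sub_right, sub_div, sub_smul]

theorem inner_self_smul_projA (a v : E) : ⟪a, a⟫_ℂ • projA a v = ⟪a, v⟫_ℂ • a := by
  rcases eq_or_ne a 0 with rfl | ha
  · simp [projA]
  · rw [projA, smul_smul, mul_div_cancel₀ _ (inner_self_ne_zero.2 ha)]

theorem inner_projA (a v : E) : ⟪a, projA a v⟫_ℂ = ⟪a, v⟫_ℂ := by
  rcases eq_or_ne a 0 with rfl | ha
  · simp
  · rw [projA, inner_smul_right, div_mul_cancel₀ _ (inner_self_ne_zero.2 ha)]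

theorem projA_self (a : E) : projA a a = a := by
  rcases eq_or_ne a 0 with rfl | ha
  · simp [projA]
  · rw [projA, div_self (inner_self_ne_zero.2 ha), one_smul]

theorem projA_projA (a v : E) : projA a (projA a v) = projA a v := by
  rw [projA, inner_projA, ← projA]

/-- `s Q_a + P_a` -/
noncomputable def scaleOrthA (a : E) (s : ℂ) (v : E) : E :=
  s • (v - projA a v) + projA a v

theorem scaleOrthA_smul (a : E) (s c : ℂ) (v : E) :
    scaleOrthA a s (c • v) = c • scaleOrthA a s v := by
  simp only [scaleOrthA, projA_smul, ← smul_sub, smul_comm s c, smul_add]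

theorem scaleOrthA_self (a : E) (s : ℂ) : scaleOrthA a s a = a := by
  simp [scaleOrthA, projA_self]

theorem inner_scaleOrthA (a : E) (s : ℂ) (v : E) : ⟪a, scaleOrthA a s v⟫_ℂ = ⟪a, v⟫_ℂ := by
  simp [scaleOrthA, inner_projA]

theorem scaleOrthA_sub (a : E) (s : ℂ) (v w : E) :
    scaleOrthA a s (v - w) = scaleOrthA a s v - scaleOrthA a s w := by
  simp only [scaleOrthA, projA_sub]
  module

theorem scaleOrthA_scaleOrthA {a : E} {s : ℂ} (hs : s ^ 2 = 1 - ⟪a, a⟫_ℂ) (v : E) :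
    scaleOrthA a s (scaleOrthA a s v) = (1 - ⟪a, a⟫_ℂ) • v + ⟪a, v⟫_ℂ • a := by
  have hP : projA a (scaleOrthA a s v) = projA a v := by
    simp only [scaleOrthA, projA_add, projA_smul, projA_sub, projA_projA, sub_self, smul_zero,
      zero_add]
  rw [scaleOrthA, hP, scaleOrthA, ← inner_self_smul_projA]
  linear_combination (norm := module) hs • (v - projA a v)

theorem phiA_eq_smul_scaleOrthA (a y : E) :
    phiA a y = (1 - ⟪a, y⟫_ℂ)⁻¹ • scaleOrthA a (√(1 - ‖a‖ ^ 2) : ℝ) (a - y) := by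
  rw [← scaleOrthA_smul]
  rfl

theorem one_sub_inner_phiA {a y : E} (hy : ⟪a, y⟫_ℂ ≠ 1) :
    1 - ⟪a, phiA a y⟫_ℂ = (1 - ⟪a, y⟫_ℂ)⁻¹ * (1 - ⟪a, a⟫_ℂ) := by
  have ht : 1 - ⟪a, y⟫_ℂ ≠ 0 := sub_ne_zero.2 hy.symm
  rw [phiA_eq_smul_scaleOrthA, inner_smul_right, inner_scaleOrthA, inner_sub_right]
  field_simp
  ring

theorem sub_phiA {a y : E} (hy : ⟪a, y⟫_ℂ ≠ 1) :
    a - phiA a y =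
      (1 - ⟪a, y⟫_ℂ)⁻¹ • (scaleOrthA a (√(1 - ‖a‖ ^ 2) : ℝ) y - ⟪a, y⟫_ℂ • a) := by
  have ht : 1 - ⟪a, y⟫_ℂ ≠ 0 := sub_ne_zero.2 hy.symm
  rw [phiA_eq_smul_scaleOrthA, scaleOrthA_sub, scaleOrthA_self]
  linear_combination (norm := module) (inv_mul_cancel₀ ht).symm • a

theorem sq_sqrt_one_sub_norm_sq {a : E} (ha : ‖a‖ ≤ 1) :
    ((√(1 - ‖a‖ ^ 2) : ℝ) : ℂ) ^ 2 = 1 - ⟪a, a⟫_ℂ := by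
  rw [← Complex.ofReal_pow, Real.sq_sqrt (by nlinarith [norm_nonneg a]), inner_self_eq_norm_sq_to_K]
  push_cast
  rfl

theorem phiA_phiA {a y : E} (ha : ‖a‖ < 1) (hy : ⟪a, y⟫_ℂ ≠ 1) : phiA a (phiA a y) = y := by
  have ht : 1 - ⟪a, y⟫_ℂ ≠ 0 := sub_ne_zero.2 hy.symm
  have hN : 1 - ⟪a, a⟫_ℂ ≠ 0 := by
    rw [← sq_sqrt_one_sub_norm_sq ha.le]
    have hpos : 0 < 1 - ‖a‖ ^ 2 := by nlinarith [norm_nonneg a]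
    exact pow_ne_zero _ (by exact_mod_cast (Real.sqrt_pos.2 hpos).ne')
  rw [phiA_eq_smul_scaleOrthA, sub_phiA hy, scaleOrthA_smul, scaleOrthA_sub,
    scaleOrthA_scaleOrthA (sq_sqrt_one_sub_norm_sq ha.le), scaleOrthA_smul, scaleOrthA_self,
    one_sub_inner_phiA hy, add_sub_cancel_right, smul_smul, smul_smul]
  convert one_smul ℂ y using 2
  field_simp

end

theorem stmt8 {E : Type*} [NormedAddCommGroup E] [InnerProductSpace ℂ E]
    (a : E) (ha : ‖a‖ < 1) (y : E) (hy : ‖y‖ < 1) :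
    phiA a (phiA a y) = y := by
  refine phiA_phiA ha fun h => ?_
  have : ‖⟪a, y⟫_ℂ‖ < 1 :=
    (norm_inner_le_norm a y).trans_lt (by nlinarith [norm_nonneg a, norm_nonneg y])
  simp [h] at this
end

section
/- Let E be a complex Hilbert space, x in the open unit ball, and w ∈ E. Then ‖φ_x'(0)⁻¹(w)‖² = ((1-‖x‖²)‖w‖² + |⟨w,x⟩|²)/(1-‖x‖²)², and consequently ‖w‖²/(1-‖x‖²) ≤ ‖φ_x'(0)⁻¹(w)‖² ≤ ‖w‖²/(1-‖x‖²)². -/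
theorem sq_norm_inner_le_mul {𝕜 E : Type*} [RCLike 𝕜] [SeminormedAddCommGroup E]
    [InnerProductSpace 𝕜 E] (x w : E) : ‖(inner 𝕜 x w : 𝕜)‖ ^ 2 ≤ ‖x‖ ^ 2 * ‖w‖ ^ 2 := by
  rw [← mul_pow]
  gcongr
  exact norm_inner_le_norm x w

/-- With `‖φ_x'(0)⁻¹(w)‖² = ((1-‖x‖²)‖w‖² + |⟨w,x⟩|²)/(1-‖x‖²)²` (taken as definition),
the two-sided estimate `‖w‖²/(1-‖x‖²) ≤ ‖φ_x'(0)⁻¹(w)‖² ≤ ‖w‖²/(1-‖x‖²)²` holds. -/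
theorem stmt10 {E : Type*} [NormedAddCommGroup E] [InnerProductSpace ℂ E]
    (x : E) (hx : ‖x‖ < 1) (w : E) :
    ‖w‖^2 / (1 - ‖x‖^2) ≤
        ((1 - ‖x‖^2) * ‖w‖^2 + ‖(inner ℂ x w : ℂ)‖^2) / (1 - ‖x‖^2)^2 ∧
      ((1 - ‖x‖^2) * ‖w‖^2 + ‖(inner ℂ x w : ℂ)‖^2) / (1 - ‖x‖^2)^2 ≤
        ‖w‖^2 / (1 - ‖x‖^2)^2 := by
  have hd : 0 < 1 - ‖x‖ ^ 2 := by
    rw [sub_pos, sq_lt_one_iff₀ (norm_nonneg x)]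
    exact hx
  constructor
  · calc ‖w‖ ^ 2 / (1 - ‖x‖ ^ 2)
        = (1 - ‖x‖ ^ 2) * ‖w‖ ^ 2 / (1 - ‖x‖ ^ 2) ^ 2 := by field_simp
      _ ≤ _ := by gcongr; exact le_add_of_nonneg_right (sq_nonneg _)
  · gcongr
    linarith [sq_norm_inner_le_mul (𝕜 := ℂ) x w]
end

section
/- For t ∈ (0, π/2), the map ψ_t: B_2 → B_2 on the open unit ball of ℂ² given by ψ_t(z,w) = (z sin t, cos t) is a holomorphic self-map of the ball, and at x = 0 it satisfies (1-‖x‖²)/sqrt(1-‖ψ_t(x)‖²) · ‖ψ_t'(x)‖ = (sin t)/sqrt(1 - cos² t) = 1, showing the Schwarz–Pick-type bound (1-‖x‖²)/sqrt(1-‖ψ(x)‖²)·‖ψ'(x)‖ ≤ 1 is sharp. -/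
/-- The self-map `ψ_t(z,w) = (z sin t, cos t)` of the unit ball of `ℂ²`. -/
noncomputable def psiT (t : ℝ) (v : EuclideanSpace ℂ (Fin 2)) : EuclideanSpace ℂ (Fin 2) :=
  WithLp.toLp 2 (fun i : Fin 2 => if i = 0 then (Real.sin t : ℂ) * v 0 else (Real.cos t : ℂ))

open Real

theorem EuclideanSpace.norm_proj {𝕜 ι : Type*} [RCLike 𝕜] [Fintype ι] [DecidableEq ι] (i : ι) :
    ‖(EuclideanSpace.proj i : EuclideanSpace 𝕜 ι →L[𝕜] 𝕜)‖ = 1 := by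
  refine le_antisymm ?_ ?_
  · exact ContinuousLinearMap.opNorm_le_bound _ zero_le_one fun v => by
      simpa using PiLp.norm_apply_le v i
  · simpa using (EuclideanSpace.proj i : EuclideanSpace 𝕜 ι →L[𝕜] 𝕜).le_opNorm
      (EuclideanSpace.single i 1)

theorem EuclideanSpace.norm_proj_smulRight_single {𝕜 ι : Type*} [RCLike 𝕜] [Fintype ι]
    [DecidableEq ι] (i : ι) (c : 𝕜) :
    ‖(EuclideanSpace.proj i : EuclideanSpace 𝕜 ι →L[𝕜] 𝕜).smulRight
      (EuclideanSpace.single i c)‖ = ‖c‖ := by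
  rw [ContinuousLinearMap.norm_smulRight_apply, EuclideanSpace.norm_proj,
    PiLp.norm_single, one_mul]

noncomputable def psiTLinear (t : ℝ) : EuclideanSpace ℂ (Fin 2) →L[ℂ] EuclideanSpace ℂ (Fin 2) :=
  (EuclideanSpace.proj 0).smulRight (EuclideanSpace.single 0 (sin t : ℂ))

theorem psiT_eq_psiTLinear_add (t : ℝ) :
    psiT t = fun v => psiTLinear t v + EuclideanSpace.single 1 (cos t : ℂ) := by
  funext v
  ext i
  fin_cases i <;> simp [psiT, psiTLinear, mul_comm]

theorem hasFDerivAt_psiT (t : ℝ) (v : EuclideanSpace ℂ (Fin 2)) :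
    HasFDerivAt (psiT t) (psiTLinear t) v := by
  rw [psiT_eq_psiTLinear_add]
  exact (psiTLinear t).hasFDerivAt.add_const _

theorem differentiable_psiT (t : ℝ) : Differentiable ℂ (psiT t) :=
  fun v => (hasFDerivAt_psiT t v).differentiableAt

theorem norm_fderiv_psiT (t : ℝ) (v : EuclideanSpace ℂ (Fin 2)) :
    ‖fderiv ℂ (psiT t) v‖ = |sin t| := by
  rw [(hasFDerivAt_psiT t v).fderiv, psiTLinear, EuclideanSpace.norm_proj_smulRight_single,
    Complex.norm_real, norm_eq_abs]

theorem norm_psiT_sq (t : ℝ) (v : EuclideanSpace ℂ (Fin 2)) :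
    ‖psiT t v‖ ^ 2 = sin t ^ 2 * ‖v 0‖ ^ 2 + cos t ^ 2 := by
  simp [EuclideanSpace.norm_sq_eq, psiT, Fin.sum_univ_two, mul_pow, Complex.norm_real,
    -Complex.ofReal_sin, -Complex.ofReal_cos]

theorem norm_psiT_lt_one {t : ℝ} (ht : sin t ≠ 0) {v : EuclideanSpace ℂ (Fin 2)} (hv : ‖v‖ < 1) :
    ‖psiT t v‖ < 1 := by
  have hv0 : ‖v 0‖ ^ 2 < 1 := by
    nlinarith [(PiLp.norm_apply_le v 0).trans_lt hv, norm_nonneg (v 0)]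
  have hsq : ‖psiT t v‖ ^ 2 < 1 := by
    rw [norm_psiT_sq]
    nlinarith [sin_sq_add_cos_sq t, pow_pos (abs_pos.2 ht) 2, sq_abs (sin t)]
  nlinarith [norm_nonneg (psiT t v)]

theorem stmt12 (t : ℝ) (ht : t ∈ Set.Ioo 0 (Real.pi / 2)) :
    (∀ v ∈ Metric.ball (0 : EuclideanSpace ℂ (Fin 2)) 1,
        psiT t v ∈ Metric.ball (0 : EuclideanSpace ℂ (Fin 2)) 1) ∧
    Differentiable ℂ (psiT t) ∧
    (1 - ‖(0 : EuclideanSpace ℂ (Fin 2))‖^2) / Real.sqrt (1 - ‖psiT t 0‖^2) *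
        ‖fderiv ℂ (psiT t) 0‖ = Real.sin t / Real.sqrt (1 - Real.cos t ^ 2) ∧
    Real.sin t / Real.sqrt (1 - Real.cos t ^ 2) = 1 := by
  obtain ⟨ht0, htπ⟩ := ht
  have hsin : 0 < sin t := sin_pos_of_pos_of_lt_pi ht0 (by linarith [pi_pos])
  have hsqrt : √(1 - cos t ^ 2) = sin t :=
    (sin_eq_sqrt_one_sub_cos_sq ht0.le (by linarith [pi_pos])).symm
  refine ⟨fun v hv => ?_, differentiable_psiT t, ?_, by rw [hsqrt, div_self hsin.ne']⟩
  · simpa using norm_psiT_lt_one hsin.ne' (by simpa using hv)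
  · rw [norm_fderiv_psiT, norm_psiT_sq, abs_of_pos hsin]
    simp [div_eq_inv_mul]
end

section
/- Let a, b be elements of a complex Hilbert space with ‖a‖ < 1 and 0 < ‖b‖ < 1. Then |1 - ⟨a, b/‖b‖⟩| ≤ 2 |1 - ⟨a,b⟩|. -/
/-
Write z = ⟨b, a⟩, so that the left side is ‖1 - z / ‖b‖‖ and ‖z‖ ≤ ‖b‖ by Cauchy–Schwarz. Rescaling z
to z / ‖b‖ moves it by (‖b‖⁻¹ - 1) ‖z‖ ≤ 1 - ‖z‖, and 1 - ‖z‖ ≤ ‖1 - z‖; the triangle inequality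
then gives the factor 2.
-/

theorem norm_sub_inv_smul_le {E : Type*} [SeminormedAddCommGroup E] [NormedSpace ℝ E]
    {z : E} {r : ℝ} (hr : r ≤ 1) (hz : ‖z‖ ≤ r) : ‖z - r⁻¹ • z‖ ≤ 1 - ‖z‖ := by
  rcases ((norm_nonneg z).trans hz).eq_or_lt with rfl | hr0
  · have hz0 : ‖z‖ = 0 := le_antisymm hz (norm_nonneg z)
    simp [hz0]
  have hinv : 1 ≤ r⁻¹ := (one_le_inv₀ hr0).mpr hr
  have hsmul : (1 - r⁻¹) • z = z - r⁻¹ • z := by rw [sub_smul, one_smul]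
  calc ‖z - r⁻¹ • z‖ = (r⁻¹ - 1) * ‖z‖ := by
        rw [← hsmul, norm_smul, Real.norm_eq_abs, abs_sub_comm,
          abs_of_nonneg (sub_nonneg.mpr hinv)]
    _ = r⁻¹ * ‖z‖ - ‖z‖ := by ring
    _ ≤ 1 - ‖z‖ := by
        gcongr
        exact inv_mul_le_one_of_le₀ hz hr0.le

theorem norm_one_sub_inv_smul_le_two_mul {A : Type*} [NormedRing A] [NormOneClass A]
    [NormedSpace ℝ A] {z : A} {r : ℝ} (hr : r ≤ 1) (hz : ‖z‖ ≤ r) :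
    ‖1 - r⁻¹ • z‖ ≤ 2 * ‖1 - z‖ := by
  have h := norm_sub_norm_le (1 : A) z
  rw [norm_one] at h
  calc ‖1 - r⁻¹ • z‖ ≤ ‖1 - z‖ + ‖z - r⁻¹ • z‖ := norm_sub_le_norm_sub_add_norm_sub _ _ _
    _ ≤ ‖1 - z‖ + (1 - ‖z‖) := by gcongr; exact norm_sub_inv_smul_le hr hz
    _ ≤ 2 * ‖1 - z‖ := by linarith

theorem stmt15_general {E : Type*} [NormedAddCommGroup E] [InnerProductSpace ℂ E]
    (a b : E) (ha : ‖a‖ < 1) (hb : ‖b‖ < 1) :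
    ‖(1 - (inner ℂ ((‖b‖⁻¹ : ℝ) • b) a : ℂ))‖ ≤
      2 * ‖(1 - (inner ℂ b a : ℂ))‖ := by
  have hba : ‖(inner ℂ b a : ℂ)‖ ≤ ‖b‖ :=
    (norm_inner_le_norm b a).trans (mul_le_of_le_one_right (norm_nonneg b) ha.le)
  rw [inner_smul_left_eq_star_smul, conj_trivial]
  exact norm_one_sub_inv_smul_le_two_mul hb.le hba

theorem stmt15 {E : Type*} [NormedAddCommGroup E] [InnerProductSpace ℂ E]
    (a b : E) (ha : ‖a‖ < 1) (hb0 : 0 < ‖b‖) (hb : ‖b‖ < 1) :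
    ‖(1 - (inner ℂ ((‖b‖⁻¹ : ℝ) • b) a : ℂ))‖ ≤
      2 * ‖(1 - (inner ℂ b a : ℂ))‖ :=
  stmt15_general a b ha hb
end

section
/- Let E be a complex Hilbert space, y in the open unit ball with y ≠ 0, and define f_y(x) = 1/(1 - ⟨x,y⟩) for x in the open unit ball. Then f_y is holomorphic and its Bloch semi-norm satisfies sup_{x ∈ B_E} (1-‖x‖²)‖f_y'(x)‖ = ‖y‖/(1-‖y‖²). -/
/-!
The derivative of `f x = (1 - ⟪y, x⟫)⁻¹` is `(1 - ⟪y, x⟫)⁻² • ⟪y, ·⟫`, of norm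
`‖y‖ / ‖1 - ⟪y, x⟫‖²`.
Since `‖1 - ⟪y, x⟫‖ ≥ 1 - ‖x‖ ‖y‖` and `(1 - ‖x‖ ‖y‖)² - (1 - ‖x‖²)(1 - ‖y‖²) = (‖x‖ - ‖y‖)²`,
we get `(1 - ‖x‖²)(1 - ‖y‖²) ≤ ‖1 - ⟪y, x⟫‖²`, which bounds `(1 - ‖x‖²) ‖f' x‖` by
`‖y‖ / (1 - ‖y‖²)`; at `x = y` all these inequalities are equalities, so the supremum is attained.
-/

open scoped InnerProductSpace

section

variable {𝕜 E : Type*} [RCLike 𝕜] [NormedAddCommGroup E] [InnerProductSpace 𝕜 E]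

lemma one_sub_norm_mul_norm_le_norm_one_sub_inner (x y : E) :
    1 - ‖y‖ * ‖x‖ ≤ ‖1 - ⟪y, x⟫_𝕜‖ := by
  have h := norm_sub_norm_le (1 : 𝕜) ⟪y, x⟫_𝕜
  rw [norm_one] at h
  linarith [norm_inner_le_norm (𝕜 := 𝕜) y x]

lemma one_sub_inner_ne_zero {x y : E} (hx : ‖x‖ < 1) (hy : ‖y‖ ≤ 1) : 1 - ⟪y, x⟫_𝕜 ≠ 0 := by
  have hxy : ‖y‖ * ‖x‖ < 1 := by nlinarith [norm_nonneg x, norm_nonneg y]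
  rw [← norm_pos_iff]
  linarith [one_sub_norm_mul_norm_le_norm_one_sub_inner (𝕜 := 𝕜) x y]

lemma one_sub_sq_mul_one_sub_sq_le_norm_one_sub_inner_sq {x y : E} (hx : ‖x‖ ≤ 1)
    (hy : ‖y‖ ≤ 1) : (1 - ‖x‖ ^ 2) * (1 - ‖y‖ ^ 2) ≤ ‖1 - ⟪y, x⟫_𝕜‖ ^ 2 := by
  have hxy : 0 ≤ 1 - ‖y‖ * ‖x‖ := by nlinarith [norm_nonneg x, norm_nonneg y]
  have h := pow_le_pow_left₀ hxy (one_sub_norm_mul_norm_le_norm_one_sub_inner (𝕜 := 𝕜) x y) 2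
  nlinarith [sq_nonneg (‖x‖ - ‖y‖)]

lemma norm_one_sub_inner_self {y : E} (hy : ‖y‖ ≤ 1) : ‖1 - ⟪y, y⟫_𝕜‖ = 1 - ‖y‖ ^ 2 := by
  rw [inner_self_eq_norm_sq_to_K, ← RCLike.ofReal_pow, ← RCLike.ofReal_one, ← RCLike.ofReal_sub,
    RCLike.norm_ofReal, abs_of_nonneg]
  nlinarith [norm_nonneg y]

lemma hasFDerivAt_inv_one_sub_inner {x y : E} (hxy : 1 - ⟪y, x⟫_𝕜 ≠ 0) :
    HasFDerivAt (fun x : E => (1 - ⟪y, x⟫_𝕜)⁻¹) (((1 - ⟪y, x⟫_𝕜) ^ 2)⁻¹ • innerSL 𝕜 y) x := by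
  have h := ((innerSL 𝕜 y).hasFDerivAt (x := x)).const_sub (1 : 𝕜)
  refine ((hasFDerivAt_inv hxy).comp x h).congr_fderiv ?_
  ext v
  simp [mul_comm]

lemma norm_fderiv_inv_one_sub_inner {x y : E} (hxy : 1 - ⟪y, x⟫_𝕜 ≠ 0) :
    ‖fderiv 𝕜 (fun x : E => (1 - ⟪y, x⟫_𝕜)⁻¹) x‖ = ‖y‖ / ‖1 - ⟪y, x⟫_𝕜‖ ^ 2 := by
  rw [(hasFDerivAt_inv_one_sub_inner hxy).fderiv, norm_smul, innerSL_apply_norm, norm_inv,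
    norm_pow, inv_mul_eq_div]

lemma one_sub_sq_mul_norm_fderiv_inv_one_sub_inner_le {x y : E} (hx : ‖x‖ < 1) (hy : ‖y‖ < 1) :
    (1 - ‖x‖ ^ 2) * ‖fderiv 𝕜 (fun x : E => (1 - ⟪y, x⟫_𝕜)⁻¹) x‖ ≤ ‖y‖ / (1 - ‖y‖ ^ 2) := by
  have hxy := one_sub_inner_ne_zero (𝕜 := 𝕜) hx hy.le
  have hy2 : 0 < 1 - ‖y‖ ^ 2 := by nlinarith [norm_nonneg y]
  rw [norm_fderiv_inv_one_sub_inner hxy, mul_div_assoc', div_le_div_iff₀ (by positivity) hy2]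
  nlinarith [norm_nonneg y,
    one_sub_sq_mul_one_sub_sq_le_norm_one_sub_inner_sq (𝕜 := 𝕜) hx.le hy.le]

lemma one_sub_sq_mul_norm_fderiv_inv_one_sub_inner_self {y : E} (hy : ‖y‖ < 1) :
    (1 - ‖y‖ ^ 2) * ‖fderiv 𝕜 (fun x : E => (1 - ⟪y, x⟫_𝕜)⁻¹) y‖ = ‖y‖ / (1 - ‖y‖ ^ 2) := by
  have hy2 : 1 - ‖y‖ ^ 2 ≠ 0 := by nlinarith [norm_nonneg y]
  rw [norm_fderiv_inv_one_sub_inner (one_sub_inner_ne_zero hy hy.le),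
    norm_one_sub_inner_self hy.le]
  field_simp

end

theorem stmt16_general {E : Type*} [NormedAddCommGroup E] [InnerProductSpace ℂ E]
    (y : E) (hy : ‖y‖ < 1) :
    DifferentiableOn ℂ (fun x : E => (1 - (inner ℂ y x : ℂ))⁻¹) (Metric.ball 0 1) ∧
    (⨆ x : Metric.ball (0 : E) 1,
        (1 - ‖(x : E)‖^2) * ‖fderiv ℂ (fun x : E => (1 - (inner ℂ y x : ℂ))⁻¹) x‖)
      = ‖y‖ / (1 - ‖y‖^2) := by
  have hyball : y ∈ Metric.ball (0 : E) 1 := mem_ball_zero_iff.mpr hy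
  have hbound (x : Metric.ball (0 : E) 1) :=
    one_sub_sq_mul_norm_fderiv_inv_one_sub_inner_le (𝕜 := ℂ) (mem_ball_zero_iff.mp x.2) hy
  refine ⟨fun x hx => ?_, le_antisymm (ciSup_le hbound) ?_⟩
  · have hxy := one_sub_inner_ne_zero (𝕜 := ℂ) (mem_ball_zero_iff.mp hx) hy.le
    exact (hasFDerivAt_inv_one_sub_inner hxy).differentiableAt.differentiableWithinAt
  · exact le_ciSup_of_le ⟨_, Set.forall_mem_range.mpr hbound⟩ ⟨y, hyball⟩
      (one_sub_sq_mul_norm_fderiv_inv_one_sub_inner_self hy).ge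

theorem stmt16 {E : Type*} [NormedAddCommGroup E] [InnerProductSpace ℂ E] [CompleteSpace E]
    (y : E) (hy : ‖y‖ < 1) (hy0 : y ≠ 0) :
    DifferentiableOn ℂ (fun x : E => (1 - (inner ℂ y x : ℂ))⁻¹) (Metric.ball 0 1) ∧
    (⨆ x : Metric.ball (0 : E) 1,
        (1 - ‖(x : E)‖^2) * ‖fderiv ℂ (fun x : E => (1 - (inner ℂ y x : ℂ))⁻¹) x‖)
      = ‖y‖ / (1 - ‖y‖^2) :=
  stmt16_general y hy
end
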